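/- The axiom (Ung4) is sound: for all expressions E, F, rec X.(τ.(pri(X) + E) + F) ≃ rec X.(τ.X + E + F). -/

import Mathlib

/-!
Let `P = rec X.(τ.(pri(X) + E) + F)`, `Q = rec X.(τ.X + E + F)` and let `A = pri(P) + E{P/X}` be
the `τ`-derivative of `P`. The closure of `{(P, Q), (A, Q)}` under closed contexts is a weak
bisimulation in which every step, also the first one, is answered by a nonempty weak step, so
`P ≃ Q`. A step of an instantiated context `C[σ]` either comes from `C` itself, and `C[ρ]` answers
it, or from an unguarded `σ z`; since recursion may be unguarded, this is argued by induction on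
the depth of the derivation of the step. `P`, `A` and `Q` never perform `δ`, and the negative
premises `¬ CanTau` of the `δ`-rules transfer because related terms simulate each other's
`τ`-steps.
-/

namespace PrioCalc

inductive Act where
  | tau : Act
  | vis : ℕ → Act
  | delta : Act
deriving DecidableEq

inductive Expr where
  | nil : Expr
  | var : ℕ → Expr
  | pre : Act → Expr → Expr
  | sum : Expr → Expr → Expr
  | recur : ℕ → Expr → Expr
  | pri : Expr → Expr
deriving DecidableEq

/-- Syntactic substitution of `F` for the free occurrences of variable `x`. -/
def subst : Expr → ℕ → Expr → Expr
  | .nil, _, _ => .nil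
  | .var m, x, F => if m = x then F else .var m
  | .pre γ E, x, F => .pre γ (subst E x F)
  | .sum E G, x, F => .sum (subst E x F) (subst G x F)
  | .recur y E, x, F => if y = x then .recur y E else .recur y (subst E x F)
  | .pri E, x, F => .pri (subst E x F)

/-- `free E x` : `x` occurs free in `E`. -/
def free : Expr → ℕ → Prop
  | .nil, _ => False
  | .var m, x => m = x
  | .pre _ E, x => free E x
  | .sum E G, x => free E x ∨ free G x
  | .recur y E, x => x ≠ y ∧ free E x
  | .pri E, x => free E x

def Closed (E : Expr) : Prop := ∀ x, ¬ free E x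

/-- Standard (non-δ) transitions; these never depend on δ-transitions. -/
inductive StepStd : Expr → Act → Expr → Prop where
  | pre {α : Act} (h : α ≠ Act.delta) (E : Expr) : StepStd (.pre α E) α E
  | sumL {P α P'} (Q : Expr) : StepStd P α P' → StepStd (.sum P Q) α P'
  | sumR {Q α Q'} (P : Expr) : StepStd Q α Q' → StepStd (.sum P Q) α Q'
  | unf {x E γ P'} : StepStd (subst E x (.recur x E)) γ P' → StepStd (.recur x E) γ P'
  | pri {P α P'} : StepStd P α P' → StepStd (.pri P) α P'

def CanTau (P : Expr) : Prop := ∃ P', StepStd P Act.tau P'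

/-- δ-transitions (stratified: the negative premise refers to standard transitions). -/
inductive StepDel : Expr → Expr → Prop where
  | pre (E : Expr) : StepDel (.pre Act.delta E) E
  | sumL {P P'} (Q : Expr) : StepDel P P' → ¬ CanTau Q → StepDel (.sum P Q) P'
  | sumR {Q Q'} (P : Expr) : StepDel Q Q' → ¬ CanTau P → StepDel (.sum P Q) Q'
  | unf {x E P'} : StepDel (subst E x (.recur x E)) P' → StepDel (.recur x E) P'

/-- The full (prioritized) transition relation. -/
def Step (P : Expr) (γ : Act) (Q : Expr) : Prop :=
  if γ = Act.delta then StepDel P Q else StepStd P γ Q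

def TauStar : Expr → Expr → Prop :=
  Relation.ReflTransGen (fun P Q => Step P Act.tau Q)

/-- Weak transition `==γ==>` : τ* γ τ* (at least one γ step). -/
def Weak (P : Expr) (γ : Act) (Q : Expr) : Prop :=
  ∃ P₁ P₂, TauStar P P₁ ∧ Step P₁ γ P₂ ∧ TauStar P₂ Q

/-- Weak transition `==γ̂==>`. -/
def WeakHat (P : Expr) (γ : Act) (Q : Expr) : Prop :=
  if γ = Act.tau then TauStar P Q else Weak P γ Q

def IsWeakBisim (β : Expr → Expr → Prop) : Prop :=
  ∀ P Q, β P Q →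
    (∀ γ P', Step P γ P' → ∃ Q', WeakHat Q γ Q' ∧ β P' Q') ∧
    (∀ γ Q', Step Q γ Q' → ∃ P', WeakHat P γ P' ∧ β P' Q')

/-- Weak bisimilarity `≈`. -/
def WBisim (P Q : Expr) : Prop := ∃ β, IsWeakBisim β ∧ β P Q

/-- Observational congruence `≃`. -/
def ObsCong (P Q : Expr) : Prop :=
  (∀ γ P', Step P γ P' → ∃ Q', Weak Q γ Q' ∧ WBisim P' Q') ∧
  (∀ γ Q', Step Q γ Q' → ∃ P', Weak P γ P' ∧ WBisim P' Q')

/-- Terms of the basic calculus (no occurrence of the auxiliary `pri` operator). -/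
def PriFree : Expr → Prop
  | .nil => True
  | .var _ => True
  | .pre _ E => PriFree E
  | .sum E F => PriFree E ∧ PriFree F
  | .recur _ E => PriFree E
  | .pri _ => False

/-- Every free occurrence of `x` in `E` is (strongly) guarded. -/
def GVar : Expr → ℕ → Prop
  | .nil, _ => True
  | .var m, x => m ≠ x
  | .pre γ E, x => γ = Act.tau → GVar E x
  | .sum E F, x => GVar E x ∧ GVar F x
  | .recur y E, x => y ≠ x → GVar E x
  | .pri E, x => GVar E x

/-- `E` is (strongly) guarded: every recursion subterm is guarded. -/
def Guarded : Expr → Prop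
  | .nil => True
  | .var _ => True
  | .pre _ E => Guarded E
  | .sum E F => Guarded E ∧ Guarded F
  | .recur y E => GVar E y ∧ Guarded E
  | .pri E => Guarded E

/-- Some free occurrence of `x` in `E` is unguarded (not under a non-τ prefix). -/
def UnguardedVar : Expr → ℕ → Prop
  | .nil, _ => False
  | .var m, x => m = x
  | .pre γ E, x => γ = Act.tau ∧ UnguardedVar E x
  | .sum E F, x => UnguardedVar E x ∨ UnguardedVar F x
  | .recur y E, x => y ≠ x ∧ UnguardedVar E x
  | .pri E, x => UnguardedVar E x

/-- `x` is serial in `E` : every subexpression containing `x` free, apart from `x`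
itself, is a prefix, a sum or a recursion. -/
def SerialVar : Expr → ℕ → Prop
  | .nil, _ => True
  | .var _, _ => True
  | .pre _ E, x => SerialVar E x
  | .sum E F, x => SerialVar E x ∧ SerialVar F x
  | .recur y E, x => y = x ∨ SerialVar E x
  | .pri E, x => ¬ free E x

/-- Simultaneous substitution of closed terms for free variables. -/
def msubst : Expr → (ℕ → Expr) → Expr
  | .nil, _ => .nil
  | .var m, σ => σ m
  | .pre γ E, σ => .pre γ (msubst E σ)
  | .sum E F, σ => .sum (msubst E σ) (msubst F σ)
  | .recur y E, σ => .recur y (msubst E (Function.update σ y (.var y)))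
  | .pri E, σ => .pri (msubst E σ)

/-- Observational congruence on open terms (via closed substitutions). -/
def ObsCongO (E F : Expr) : Prop :=
  ∀ σ : ℕ → Expr, (∀ n, Closed (σ n)) → ObsCong (msubst E σ) (msubst F σ)

/-- The axiom system 𝒜. -/
inductive Prov : Expr → Expr → Prop where
  | refl (E) : Prov E E
  | symm {E F} : Prov E F → Prov F E
  | trans {E F G} : Prov E F → Prov F G → Prov E G
  | congPre (γ) {E F} : Prov E F → Prov (.pre γ E) (.pre γ F)
  | congSum {E E' F F'} : Prov E E' → Prov F F' → Prov (.sum E F) (.sum E' F')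
  | congRec (x) {E F} : Prov E F → Prov (.recur x E) (.recur x F)
  | congPri {E F} : Prov E F → Prov (.pri E) (.pri F)
  | a1 (E F) : Prov (.sum E F) (.sum F E)
  | a2 (E F G) : Prov (.sum (.sum E F) G) (.sum E (.sum F G))
  | a3 (E) : Prov (.sum E E) E
  | a4 (E) : Prov (.sum E .nil) E
  | tau1 (γ E) : Prov (.pre γ (.pre Act.tau E)) (.pre γ E)
  | tau2 (E) : Prov (.sum E (.pre Act.tau E)) (.pre Act.tau E)
  | tau3 (γ E F) :
      Prov (.sum (.pre γ (.sum E (.pre Act.tau F))) (.pre γ F))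
           (.pre γ (.sum E (.pre Act.tau F)))
  | pri1 : Prov (.pri .nil) .nil
  | pri2 {α} (h : α ≠ Act.delta) (E) : Prov (.pri (.pre α E)) (.pre α E)
  | pri3 (E) : Prov (.pri (.pre Act.delta E)) .nil
  | pri4 (E F) : Prov (.pri (.sum E F)) (.sum (.pri E) (.pri F))
  | pri5 (E) : Prov (.pri (.pri E)) (.pri E)
  | pri6 (E F) : Prov (.sum (.pre Act.tau E) F) (.sum (.pre Act.tau E) (.pri F))
  | rec1 (x E) : Prov (.recur x E) (subst E x (.recur x E))
  | rec2 {x E F} (hs : SerialVar E x) (hg : GVar E x) :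
      Prov F (subst E x F) → Prov F (.recur x E)
  | ung1 (x E) : Prov (.recur x (.sum (.var x) E)) (.recur x E)
  | ung2 (x E) :
      Prov (.recur x (.sum (.pre Act.tau (.var x)) E)) (.recur x (.pre Act.tau (.pri E)))
  | ung3 (x E F) :
      Prov (.recur x (.sum (.pre Act.tau (.sum (.var x) E)) F))
           (.recur x (.sum (.sum (.pre Act.tau (.var x)) E) F))
  | ung4 (x E F) :
      Prov (.recur x (.sum (.pre Act.tau (.sum (.pri (.var x)) E)) F))
           (.recur x (.sum (.sum (.pre Act.tau (.var x)) E) F))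

/-- Standard equation sets: formal variables are `X i = var i` for `i < n`,
free variables are variables `≥ n`. -/
structure StdEqSet (n : ℕ) where
  pres : Fin n → List (Act × Fin n)
  frees : Fin n → List ℕ
  frees_ge : ∀ i, ∀ w ∈ frees i, n ≤ w

/-- The body `H_i{Ẽ/X̃}` of the `i`-th equation with expressions `Es` for the
formal variables. -/
def instBody {n : ℕ} (S : StdEqSet n) (Es : Fin n → Expr) (i : Fin n) : Expr :=
  (S.pres i).foldr (fun p acc => Expr.sum (Expr.pre p.1 (Es p.2)) acc)
    ((S.frees i).foldr (fun w acc => Expr.sum (Expr.var w) acc) Expr.nil)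

/-- `E` provably satisfies `S` (distinguished variable `X 0`). -/
def ProvSat {n : ℕ} (hn : 0 < n) (E : Expr) (S : StdEqSet n) : Prop :=
  ∃ Es : Fin n → Expr, Es ⟨0, hn⟩ = E ∧
    (∀ i x, free (Es i) x → n ≤ x) ∧
    (∀ i, Prov (Es i) (instBody S Es i))

/-- No equation contains both a τ-prefixed and a δ-prefixed summand. -/
def Prioritized {n : ℕ} (S : StdEqSet n) : Prop :=
  ∀ i, (∃ j, (Act.tau, j) ∈ S.pres i) → ∀ j, (Act.delta, j) ∉ S.pres i

/-- No cycle of unguarded (i.e. τ-prefixed) dependencies. -/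
def EqGuarded {n : ℕ} (S : StdEqSet n) : Prop :=
  ∀ i : Fin n, ¬ Relation.TransGen (fun i j : Fin n => (Act.tau, j) ∈ S.pres i) i i

/-- Delete every δ-prefixed summand from equations that also contain a
τ-prefixed summand. -/
def prioritize {n : ℕ} (S : StdEqSet n) : StdEqSet n where
  pres i := if (S.pres i).any (fun p => decide (p.1 = Act.tau))
            then (S.pres i).filter (fun p => decide (p.1 ≠ Act.delta))
            else S.pres i
  frees := S.frees
  frees_ge := S.frees_ge

theorem subst_of_not_free {G : Expr} {x : ℕ} (T : Expr) (h : ¬ free G x) : subst G x T = G := by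
  induction G with
  | nil => rfl
  | var m => simp_all [subst, free]
  | pre γ E ih => simp_all [subst, free]
  | sum E F ihE ihF => simp_all [subst, free]
  | recur y E ih =>
    by_cases hy : y = x
    · simp [subst, hy]
    · simp_all [subst, free, Ne.symm hy]
  | pri E ih => simp_all [subst, free]

theorem msubst_var_eq (G : Expr) : msubst G Expr.var = G := by
  induction G with
  | nil => rfl
  | var m => rfl
  | pre γ E ih => simp [msubst, ih]
  | sum E F ihE ihF => simp [msubst, ihE, ihF]
  | recur y E ih => simp [msubst, Function.update_eq_self, ih]
  | pri E ih => simp [msubst, ih]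

theorem subst_eq_msubst (G : Expr) (x : ℕ) (T : Expr) :
    subst G x T = msubst G (Function.update Expr.var x T) := by
  induction G with
  | nil => rfl
  | var m => by_cases hm : m = x <;> simp [subst, msubst, hm]
  | pre γ E ih => simp [subst, msubst, ih]
  | sum E F ihE ihF => simp [subst, msubst, ihE, ihF]
  | recur y E ih =>
    by_cases hy : y = x
    · subst hy
      simp [subst, msubst, Function.update_eq_self, msubst_var_eq]
    · have hupd : Function.update (Function.update Expr.var x T) y (.var y) =
          Function.update Expr.var x T :=
        Function.update_eq_self_iff.mpr (Function.update_of_ne hy _ _).symm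
      rw [subst, if_neg hy, msubst, ih, hupd]
  | pri E ih => simp [subst, msubst, ih]

theorem exists_free_of_free_msubst {G : Expr} {σ : ℕ → Expr} {w : ℕ}
    (h : free (msubst G σ) w) : ∃ z, free G z ∧ free (σ z) w := by
  induction G generalizing σ with
  | nil => exact h.elim
  | var m => exact ⟨m, rfl, h⟩
  | pre γ E ih => exact ih h
  | sum E F ihE ihF =>
    rcases h with h | h
    · obtain ⟨z, hz, hw⟩ := ihE h; exact ⟨z, Or.inl hz, hw⟩
    · obtain ⟨z, hz, hw⟩ := ihF h; exact ⟨z, Or.inr hz, hw⟩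
  | recur y E ih =>
    obtain ⟨hwy, h⟩ := h
    obtain ⟨z, hz, hw⟩ := ih h
    by_cases hzy : z = y
    · subst hzy; simp only [Function.update_self, free] at hw; exact absurd hw.symm hwy
    · rw [Function.update_of_ne hzy] at hw
      exact ⟨z, ⟨hzy, hz⟩, hw⟩
  | pri E ih => exact ih h

def ClosedOn (G : Expr) (σ : ℕ → Expr) : Prop := ∀ z, free G z → Closed (σ z)

theorem ClosedOn.closed_msubst {G : Expr} {σ : ℕ → Expr} (h : ClosedOn G σ) :
    Closed (msubst G σ) := fun w hw =>
  let ⟨z, hz, hzw⟩ := exists_free_of_free_msubst hw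
  h z hz w hzw

theorem ClosedOn.update_recur {y : ℕ} {H K : Expr} {σ : ℕ → Expr}
    (h : ClosedOn (.recur y H) σ) (hK : Closed K) : ClosedOn H (Function.update σ y K) := by
  intro z hz
  by_cases hzy : z = y
  · subst hzy; simpa using hK
  · rw [Function.update_of_ne hzy]; exact h z ⟨hzy, hz⟩

theorem closedOn_update_var {G T : Expr} {x : ℕ} (hG : ∀ z, free G z → z = x) (hT : Closed T) :
    ClosedOn G (Function.update Expr.var x T) := by
  intro z hz
  obtain rfl := hG z hz
  simpa using hT

theorem free_msubst_update_var {G : Expr} {σ : ℕ → Expr} {x z : ℕ} (hσ : ∀ n, Closed (σ n))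
    (h : free (msubst G (Function.update σ x (.var x))) z) : z = x := by
  obtain ⟨w, -, hw⟩ := exists_free_of_free_msubst h
  by_cases hwx : w = x
  · subst hwx; simpa [free, eq_comm] using hw
  · rw [Function.update_of_ne hwx] at hw; exact absurd hw (hσ w z)

theorem subst_msubst_update {H K : Expr} {y : ℕ} {σ : ℕ → Expr}
    (hσ : ∀ m, free H m → m ≠ y → σ m = .var m ∨ Closed (σ m)) :
    subst (msubst H (Function.update σ y (.var y))) y K = msubst H (Function.update σ y K) := by
  induction H generalizing σ with
  | nil => rfl
  | var m =>
    by_cases hm : m = y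
    · subst hm; simp [msubst, subst]
    · simp only [msubst, Function.update_of_ne hm]
      rcases hσ m rfl hm with h | h
      · simp [h, subst, hm]
      · exact subst_of_not_free K (h y)
  | pre γ E ih => simp only [msubst, subst, ih hσ]
  | sum E F ihE ihF =>
    simp only [msubst, subst]
    rw [ihE fun m hm => hσ m (Or.inl hm), ihF fun m hm => hσ m (Or.inr hm)]
  | recur z E ih =>
    by_cases hz : z = y
    · subst hz; simp [msubst, subst]
    · simp only [msubst, subst, if_neg hz]
      rw [Function.update_comm (Ne.symm hz), Function.update_comm (Ne.symm hz)]
      refine congrArg _ (ih fun m hm hmy => ?_)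
      by_cases hmz : m = z
      · subst hmz; simp
      · rw [Function.update_of_ne hmz]; exact hσ m ⟨hmz, hm⟩ hmy
  | pri E ih => simp only [msubst, subst, ih hσ]

theorem subst_msubst_recur {H : Expr} {y : ℕ} {σ : ℕ → Expr} (h : ClosedOn (.recur y H) σ) :
    subst (msubst H (Function.update σ y (.var y))) y (msubst (.recur y H) σ) =
      msubst H (Function.update σ y (msubst (.recur y H) σ)) :=
  subst_msubst_update fun m hm hmy => .inr (h m ⟨hmy, hm⟩)

theorem tau_ne_delta : Act.tau ≠ Act.delta := nofun

theorem step_iff_stepStd {P Q : Expr} {γ : Act} (hγ : γ ≠ .delta) :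
    Step P γ Q ↔ StepStd P γ Q := by
  rw [Step, if_neg hγ]

theorem StepStd.ne_delta {P Q : Expr} {γ : Act} (h : StepStd P γ Q) : γ ≠ .delta := by
  induction h with
  | pre h => exact h
  | sumL _ _ ih | sumR _ _ ih | unf _ ih | pri _ ih => exact ih

theorem canTau_iff_exists_step {P : Expr} : CanTau P ↔ ∃ Q, Step P .tau Q := by
  simp [CanTau, step_iff_stepStd]

theorem Step.pre (γ : Act) (E : Expr) : Step (.pre γ E) γ E := by
  unfold Step; split_ifs with hγ
  · subst hγ; exact .pre E
  · exact .pre hγ E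

theorem Step.sumL {P Q P' : Expr} {γ : Act} (h : Step P γ P') (hQ : γ = .delta → ¬ CanTau Q) :
    Step (.sum P Q) γ P' := by
  unfold Step at *; split_ifs at * with hγ
  · exact .sumL Q h (hQ hγ)
  · exact .sumL Q h

theorem Step.sumR {P Q Q' : Expr} {γ : Act} (h : Step Q γ Q') (hP : γ = .delta → ¬ CanTau P) :
    Step (.sum P Q) γ Q' := by
  unfold Step at *; split_ifs at * with hγ
  · exact .sumR P h (hP hγ)
  · exact .sumR P h

theorem Step.unf {E P' : Expr} {x : ℕ} {γ : Act} (h : Step (subst E x (.recur x E)) γ P') :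
    Step (.recur x E) γ P' := by
  unfold Step at *; split_ifs at * with hγ
  · exact .unf h
  · exact .unf h

theorem Step.pri {P P' : Expr} {γ : Act} (h : Step P γ P') (hγ : γ ≠ .delta) :
    Step (.pri P) γ P' := by
  rw [step_iff_stepStd hγ] at h ⊢; exact .pri h

/-- `StepN n P γ Q`: `Step P γ Q` with a derivation of depth `n`. -/
inductive StepN : ℕ → Expr → Act → Expr → Prop where
  | pre (γ : Act) (E : Expr) : StepN 0 (.pre γ E) γ E
  | sumL {n P γ P'} (Q : Expr) :
      StepN n P γ P' → (γ = .delta → ¬ CanTau Q) → StepN (n + 1) (.sum P Q) γ P'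
  | sumR {n Q γ Q'} (P : Expr) :
      StepN n Q γ Q' → (γ = .delta → ¬ CanTau P) → StepN (n + 1) (.sum P Q) γ Q'
  | unf {n x E γ P'} : StepN n (subst E x (.recur x E)) γ P' → StepN (n + 1) (.recur x E) γ P'
  | pri {n P γ P'} : StepN n P γ P' → γ ≠ .delta → StepN (n + 1) (.pri P) γ P'

theorem StepStd.exists_stepN {P Q : Expr} {γ : Act} (h : StepStd P γ Q) :
    ∃ n, StepN n P γ Q := by
  induction h with
  | pre _ E => exact ⟨0, .pre _ E⟩
  | sumL Q h ih =>
    obtain ⟨n, hn⟩ := ih; exact ⟨n + 1, .sumL Q hn fun hδ => absurd hδ h.ne_delta⟩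
  | sumR P h ih =>
    obtain ⟨n, hn⟩ := ih; exact ⟨n + 1, .sumR P hn fun hδ => absurd hδ h.ne_delta⟩
  | unf _ ih => obtain ⟨n, hn⟩ := ih; exact ⟨n + 1, .unf hn⟩
  | pri h ih => obtain ⟨n, hn⟩ := ih; exact ⟨n + 1, .pri hn h.ne_delta⟩

theorem StepDel.exists_stepN {P Q : Expr} (h : StepDel P Q) : ∃ n, StepN n P .delta Q := by
  induction h with
  | pre E => exact ⟨0, .pre _ E⟩
  | sumL Q _ hQ ih => obtain ⟨n, hn⟩ := ih; exact ⟨n + 1, .sumL Q hn fun _ => hQ⟩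
  | sumR P _ hP ih => obtain ⟨n, hn⟩ := ih; exact ⟨n + 1, .sumR P hn fun _ => hP⟩
  | unf _ ih => obtain ⟨n, hn⟩ := ih; exact ⟨n + 1, .unf hn⟩

theorem Step.exists_stepN {P Q : Expr} {γ : Act} (h : Step P γ Q) : ∃ n, StepN n P γ Q := by
  unfold Step at h; split_ifs at h with hγ
  · subst hγ; exact h.exists_stepN
  · exact h.exists_stepN

theorem Weak.single {P Q : Expr} {γ : Act} (h : Step P γ Q) : Weak P γ Q :=
  ⟨P, Q, .refl, h, .refl⟩

theorem Weak.tau_head {P P₁ Q : Expr} {γ : Act} (h : Step P .tau P₁) (hw : Weak P₁ γ Q) :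
    Weak P γ Q :=
  let ⟨P₂, P₃, h₁, h₂, h₃⟩ := hw
  ⟨P₂, P₃, .head h h₁, h₂, h₃⟩

theorem Weak.canTau {P Q : Expr} (h : Weak P .tau Q) : CanTau P := by
  obtain ⟨P₁, P₂, h₁, h₂, -⟩ := h
  rw [canTau_iff_exists_step]
  rcases h₁.cases_head with rfl | ⟨P₃, h₃, -⟩
  exacts [⟨P₂, h₂⟩, ⟨P₃, h₃⟩]

theorem Weak.weakHat {P Q : Expr} {γ : Act} (h : Weak P γ Q) : WeakHat P γ Q := by
  unfold WeakHat; split_ifs with hγ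
  · subst hγ
    obtain ⟨P₁, P₂, h₁, h₂, h₃⟩ := h
    exact h₁.trans (.head h₂ h₃)
  · exact h

def StepsLift (γ : Act) (P P' : Expr) : Prop := ∀ Q, Step P γ Q → Step P' γ Q

theorem StepsLift.trans {γ : Act} {P P' P'' : Expr} (h : StepsLift γ P P')
    (h' : StepsLift γ P' P'') : StepsLift γ P P'' := fun Q hQ => h' Q (h Q hQ)

theorem Weak.lift {P P' Q : Expr} {γ : Act} (hτ : StepsLift .tau P P') (hγ : StepsLift γ P P')
    (h : Weak P γ Q) : Weak P' γ Q := by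
  obtain ⟨P₁, P₂, h₁, h₂, h₃⟩ := h
  rcases h₁.cases_head with rfl | ⟨P₃, h₃', h₁'⟩
  · exact ⟨P', P₂, .refl, hγ _ h₂, h₃⟩
  · exact ⟨P₁, P₂, .head (hτ _ h₃') h₁', h₂, h₃⟩

theorem Weak.lift_std {P P' Q : Expr} {γ : Act} (hγ : γ ≠ .delta)
    (hL : ∀ β, β ≠ .delta → StepsLift β P P') (h : Weak P γ Q) : Weak P' γ Q :=
  h.lift (hL _ tau_ne_delta) (hL _ hγ)

inductive CtxClosure (B : Expr → Expr → Prop) : Expr → Expr → Prop where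
  | base {t u : Expr} : B t u → CtxClosure B t u
  | ctx (G : Expr) {σ ρ : ℕ → Expr} : ClosedOn G σ → ClosedOn G ρ →
      (∀ z, free G z → CtxClosure B (σ z) (ρ z)) → CtxClosure B (msubst G σ) (msubst G ρ)

namespace CtxClosure

variable {B : Expr → Expr → Prop}

theorem swap {T U : Expr} (h : CtxClosure B T U) : CtxClosure (flip B) U T := by
  induction h with
  | base h => exact .base h
  | ctx G hσ hρ _ ih => exact .ctx G hρ hσ ih

theorem flip_eq : flip (CtxClosure B) = CtxClosure (flip B) :=
  funext₂ fun _ _ => propext ⟨swap, swap⟩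

theorem subst {G T U : Expr} {x : ℕ} (hG : ∀ z, free G z → z = x) (hT : Closed T)
    (hU : Closed U) (h : CtxClosure B T U) : CtxClosure B (subst G x T) (subst G x U) := by
  rw [subst_eq_msubst, subst_eq_msubst]
  refine .ctx G (closedOn_update_var hG hT) (closedOn_update_var hG hU) fun z hz => ?_
  obtain rfl := hG z hz
  simpa using h

def CtxInst (B : Expr → Expr → Prop) (G : Expr) (σ ρ : ℕ → Expr) : Prop :=
  ClosedOn G σ ∧ ClosedOn G ρ ∧ ∀ z, free G z → CtxClosure B (σ z) (ρ z)

theorem CtxInst.ctxClosure {G : Expr} {σ ρ : ℕ → Expr} (h : CtxInst B G σ ρ) :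
    CtxClosure B (msubst G σ) (msubst G ρ) :=
  .ctx G h.1 h.2.1 h.2.2

theorem CtxInst.mono {G G' : Expr} {σ ρ : ℕ → Expr} (h : CtxInst B G σ ρ)
    (hG : ∀ z, free G' z → free G z) : CtxInst B G' σ ρ :=
  ⟨fun z hz => h.1 z (hG z hz), fun z hz => h.2.1 z (hG z hz), fun z hz => h.2.2 z (hG z hz)⟩

theorem CtxInst.update_recur {y : ℕ} {H : Expr} {σ ρ : ℕ → Expr} (h : CtxInst B (.recur y H) σ ρ) :
    CtxInst B H (Function.update σ y (msubst (.recur y H) σ))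
      (Function.update ρ y (msubst (.recur y H) ρ)) := by
  refine ⟨h.1.update_recur h.1.closed_msubst, h.2.1.update_recur h.2.1.closed_msubst,
    fun z hz => ?_⟩
  by_cases hzy : z = y
  · subst hzy; simpa using h.ctxClosure
  · simpa [hzy] using h.2.2 z ⟨hzy, hz⟩

def StepCases (B : Expr → Expr → Prop) (γ : Act) (n : ℕ) (G : Expr) (σ ρ : ℕ → Expr)
    (T' : Expr) : Prop :=
  (∃ U', Step (msubst G ρ) γ U' ∧ CtxClosure B T' U') ∨
    ∃ z m, free G z ∧ m ≤ n ∧ StepN m (σ z) γ T' ∧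
      ∀ β, (β = γ ∨ β = .tau) → StepsLift β (ρ z) (msubst G ρ)

theorem stepsLift_unfold {γ : Act} {y : ℕ} {H : Expr} {ρ : ℕ → Expr}
    (hρ : ClosedOn (.recur y H) ρ) :
    StepsLift γ (msubst H (Function.update ρ y (msubst (.recur y H) ρ))) (msubst (.recur y H) ρ) :=
  fun _ hV => Step.unf (E := msubst H _) ((subst_msubst_recur hρ).symm ▸ hV)

theorem stepCases_recur {γ : Act} {n y : ℕ} {H T' : Expr} {σ ρ : ℕ → Expr}
    (ih : ∀ m < n + 1, ∀ G σ ρ T', CtxInst B G σ ρ → StepN m (msubst G σ) γ T' →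
      StepCases B γ m G σ ρ T')
    (hG : CtxInst B (.recur y H) σ ρ)
    (h : StepN n (msubst H (Function.update σ y (msubst (.recur y H) σ))) γ T') :
    StepCases B γ (n + 1) (.recur y H) σ ρ T' := by
  rcases ih n (by omega) H _ _ T' hG.update_recur h with
    ⟨U', hU', hT'⟩ | ⟨z, m, hz, hm, hs, hlift⟩
  · exact .inl ⟨U', stepsLift_unfold hG.2.1 U' hU', hT'⟩
  by_cases hzy : z = y
  · -- the step comes from the unfolded copy of the recursion itself, at smaller depth
    subst hzy
    rw [Function.update_self] at hs
    rcases ih m (by omega) _ σ ρ T' hG hs with h' | ⟨z', m', hz', hm', hs', hlift'⟩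
    · exact .inl h'
    · exact .inr ⟨z', m', hz', by omega, hs', hlift'⟩
  · refine .inr ⟨z, m, ⟨hzy, hz⟩, by omega, by simpa [hzy] using hs, fun β hβ => ?_⟩
    simpa [hzy] using (hlift β hβ).trans (stepsLift_unfold hG.2.1)

theorem stepCases {γ : Act}
    (hCT : γ = .delta → ∀ T U, CtxClosure B T U → CanTau U → CanTau T) (n : ℕ) :
    ∀ G σ ρ T', CtxInst B G σ ρ → StepN n (msubst G σ) γ T' → StepCases B γ n G σ ρ T' := by
  induction n using Nat.strong_induction_on with
  | _ n ih =>
  intro G σ ρ T' hG h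
  cases G with
  | nil => cases h
  | var z => exact .inr ⟨z, n, rfl, le_rfl, h, fun _ _ _ hV => hV⟩
  | pre γ₀ G =>
    cases h with
    | pre => exact .inl ⟨_, .pre _ _, (hG.mono (G' := G) fun _ => id).ctxClosure⟩
  | sum G₁ G₂ =>
    have side : ∀ {G : Expr}, (∀ z, free G z → free (.sum G₁ G₂) z) →
        (γ = .delta → ¬ CanTau (msubst G σ)) → γ = .delta → ¬ CanTau (msubst G ρ) :=
      fun hsub hs hγ hc => hs hγ (hCT hγ _ _ (hG.mono hsub).ctxClosure hc)
    cases h with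
    | sumL _ h hs =>
      rcases ih _ (by omega) G₁ σ ρ T' (hG.mono fun _ => .inl) h with
        ⟨U', hU', hT'⟩ | ⟨z, m, hz, hm, hs', hlift⟩
      · exact .inl ⟨U', hU'.sumL (side (fun _ => .inr) hs), hT'⟩
      · refine .inr ⟨z, m, .inl hz, by omega, hs', fun β hβ => (hlift β hβ).trans ?_⟩
        exact fun V hV => hV.sumL fun hβδ => side (fun _ => .inr) hs (by grind)
    | sumR _ h hs =>
      rcases ih _ (by omega) G₂ σ ρ T' (hG.mono fun _ => .inr) h with
        ⟨U', hU', hT'⟩ | ⟨z, m, hz, hm, hs', hlift⟩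
      · exact .inl ⟨U', hU'.sumR (side (fun _ => .inl) hs), hT'⟩
      · refine .inr ⟨z, m, .inr hz, by omega, hs', fun β hβ => (hlift β hβ).trans ?_⟩
        exact fun V hV => hV.sumR fun hβδ => side (fun _ => .inl) hs (by grind)
  | recur y H =>
    cases h with
    | unf h =>
      rw [show Expr.recur y _ = msubst (.recur y H) σ from rfl, subst_msubst_recur hG.1] at h
      exact stepCases_recur ih hG h
  | pri G =>
    cases h with
    | pri h hγ =>
      rcases ih _ (by omega) G σ ρ T' hG h with ⟨U', hU', hT'⟩ | ⟨z, m, hz, hm, hs', hlift⟩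
      · exact .inl ⟨U', hU'.pri hγ, hT'⟩
      · refine .inr ⟨z, m, hz, by omega, hs', fun β hβ => (hlift β hβ).trans ?_⟩
        exact fun V hV => hV.pri (by rcases hβ with rfl | rfl <;> simp_all)

end CtxClosure

def WeakSimAt (R S : Expr → Expr → Prop) (γ : Act) (n : ℕ) : Prop :=
  ∀ T U T', R T U → StepN n T γ T' → ∃ U', Weak U γ U' ∧ S T' U'

def WeakSim (R : Expr → Expr → Prop) : Prop :=
  ∀ γ T U T', R T U → Step T γ T' → ∃ U', Weak U γ U' ∧ R T' U'

theorem WeakSim.isWeakBisim {R : Expr → Expr → Prop} (h : WeakSim R) (h' : WeakSim (flip R)) :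
    IsWeakBisim R := fun T U hTU =>
  ⟨fun γ T' hs => let ⟨U', hw, hR⟩ := h γ T U T' hTU hs; ⟨U', hw.weakHat, hR⟩,
   fun γ U' hs => let ⟨T', hw, hR⟩ := h' γ U T U' hTU hs; ⟨T', hw.weakHat, hR⟩⟩

theorem WeakSim.obsCong {R : Expr → Expr → Prop} (h : WeakSim R) (h' : WeakSim (flip R))
    {P Q : Expr} (hPQ : R P Q) : ObsCong P Q :=
  ⟨fun γ P' hs => let ⟨Q', hw, hR⟩ := h γ P Q P' hPQ hs; ⟨Q', hw, R, h.isWeakBisim h', hR⟩,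
   fun γ Q' hs => let ⟨P', hw, hR⟩ := h' γ Q P Q' hPQ hs; ⟨P', hw, R, h.isWeakBisim h', hR⟩⟩

theorem WeakSimAt.canTau {R S : Expr → Expr → Prop} (h : ∀ n, WeakSimAt R S .tau n)
    {T U : Expr} (hTU : R T U) (hT : CanTau T) : CanTau U := by
  obtain ⟨T', hT'⟩ := hT
  obtain ⟨n, hn⟩ := hT'.exists_stepN
  obtain ⟨U', hw, -⟩ := h n T U T' hTU hn
  exact hw.canTau

def SimUpToCtx (B : Expr → Expr → Prop) (γ : Act) : Prop :=
  ∀ n, (∀ m < n, WeakSimAt (CtxClosure B) (CtxClosure B) γ m) → WeakSimAt B (CtxClosure B) γ n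

namespace CtxClosure

variable {B : Expr → Expr → Prop}

theorem weakSimAt {γ : Act} (hCT : γ = .delta → ∀ T U, CtxClosure B T U → CanTau U → CanTau T)
    (hB : SimUpToCtx B γ) (n : ℕ) : WeakSimAt (CtxClosure B) (CtxClosure B) γ n := by
  induction n using Nat.strong_induction_on with
  | _ n ih =>
  intro T U T' hTU hs
  induction hTU generalizing T' with
  | base h => exact hB n ih _ _ _ h hs
  | @ctx G σ ρ hσ hρ hR ihR =>
    rcases stepCases hCT n G σ ρ T' ⟨hσ, hρ, hR⟩ hs with ⟨U', hU', hT'⟩ | ⟨z, m, hz, hm, hs', hlift⟩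
    · exact ⟨U', .single hU', hT'⟩
    obtain ⟨U', hw, hT'⟩ : ∃ U', Weak (ρ z) γ U' ∧ CtxClosure B T' U' := by
      rcases hm.lt_or_eq with hm | rfl
      · exact ih m hm _ _ _ (hR z hz) hs'
      · exact ihR z hz T' hs'
    exact ⟨U', hw.lift (hlift _ (.inr rfl)) (hlift _ (.inl rfl)), hT'⟩

theorem weakSim (hB : ∀ γ, SimUpToCtx B γ) (hB' : ∀ γ, SimUpToCtx (flip B) γ) :
    WeakSim (CtxClosure B) := by
  -- `δ`-steps of sums are guarded by `¬ CanTau`, which transfers along the `τ`-simulation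
  have hCT : ∀ T U, CtxClosure B T U → CanTau U → CanTau T := fun _ _ h =>
    WeakSimAt.canTau (weakSimAt nofun (hB' .tau)) h.swap
  intro γ T U T' h hs
  obtain ⟨n, hn⟩ := hs.exists_stepN
  exact weakSimAt (fun _ => hCT) (hB γ) n T U T' h hn

theorem obsCong (hB : ∀ γ, SimUpToCtx B γ) (hB' : ∀ γ, SimUpToCtx (flip B) γ) {P Q : Expr}
    (h : B P Q) : ObsCong P Q :=
  (weakSim hB hB').obsCong (flip_eq ▸ weakSim hB' hB) (.base h)

end CtxClosure

section Ung4

variable {x : ℕ} {E F : Expr}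

def ung4Lhs (x : ℕ) (E F : Expr) : Expr :=
  .recur x (.sum (.pre .tau (.sum (.pri (.var x)) E)) F)

def ung4Rhs (x : ℕ) (E F : Expr) : Expr :=
  .recur x (.sum (.sum (.pre .tau (.var x)) E) F)

def ung4LhsDeriv (x : ℕ) (E F : Expr) : Expr :=
  .sum (.pri (ung4Lhs x E F)) (subst E x (ung4Lhs x E F))

inductive Ung4Rel (x : ℕ) (E F : Expr) : Expr → Expr → Prop where
  | lhs : Ung4Rel x E F (ung4Lhs x E F) (ung4Rhs x E F)
  | deriv : Ung4Rel x E F (ung4LhsDeriv x E F) (ung4Rhs x E F)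

theorem subst_ung4Lhs_body :
    subst (.sum (.pre .tau (.sum (.pri (.var x)) E)) F) x
        (.recur x (.sum (.pre .tau (.sum (.pri (.var x)) E)) F)) =
      .sum (.pre .tau (ung4LhsDeriv x E F)) (subst F x (ung4Lhs x E F)) := by
  simp [subst, ung4LhsDeriv, ung4Lhs]

theorem subst_ung4Rhs_body :
    subst (.sum (.sum (.pre .tau (.var x)) E) F) x
        (.recur x (.sum (.sum (.pre .tau (.var x)) E) F)) =
      .sum (.sum (.pre .tau (ung4Rhs x E F)) (subst E x (ung4Rhs x E F)))
        (subst F x (ung4Rhs x E F)) := by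
  simp [subst, ung4Rhs]

theorem closed_ung4Lhs (hE : ∀ z, free E z → z = x) (hF : ∀ z, free F z → z = x) :
    Closed (ung4Lhs x E F) := by
  intro w hw
  simp only [ung4Lhs, free] at hw
  obtain ⟨hwx, (h | h) | h⟩ := hw
  exacts [hwx h.symm, hwx (hE w h), hwx (hF w h)]

theorem closed_ung4Rhs (hE : ∀ z, free E z → z = x) (hF : ∀ z, free F z → z = x) :
    Closed (ung4Rhs x E F) := by
  intro w hw
  simp only [ung4Rhs, free] at hw
  obtain ⟨hwx, (h | h) | h⟩ := hw
  exacts [hwx h.symm, hwx (hE w h), hwx (hF w h)]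

theorem ung4Lhs_step_tau : Step (ung4Lhs x E F) .tau (ung4LhsDeriv x E F) :=
  .unf (by rw [subst_ung4Lhs_body]; exact (Step.pre _ _).sumL (absurd · tau_ne_delta))

theorem ung4Rhs_step_tau : Step (ung4Rhs x E F) .tau (ung4Rhs x E F) :=
  .unf (by
    rw [subst_ung4Rhs_body]
    exact ((Step.pre _ _).sumL (absurd · tau_ne_delta)).sumL (absurd · tau_ne_delta))

theorem stepsLift_substF_ung4Lhs {β : Act} (hβ : β ≠ .delta) :
    StepsLift β (subst F x (ung4Lhs x E F)) (ung4Lhs x E F) := fun _ h =>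
  .unf (by rw [subst_ung4Lhs_body]; exact h.sumR (absurd · hβ))

theorem stepsLift_ung4LhsDeriv {β : Act} (hβ : β ≠ .delta) :
    StepsLift β (ung4Lhs x E F) (ung4LhsDeriv x E F) := fun _ h =>
  (h.pri hβ).sumL (absurd · hβ)

theorem stepsLift_substE_ung4LhsDeriv {β : Act} (hβ : β ≠ .delta) :
    StepsLift β (subst E x (ung4Lhs x E F)) (ung4LhsDeriv x E F) := fun _ h =>
  h.sumR (absurd · hβ)

theorem stepsLift_substE_ung4Rhs {β : Act} (hβ : β ≠ .delta) :
    StepsLift β (subst E x (ung4Rhs x E F)) (ung4Rhs x E F) := fun _ h =>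
  .unf (by rw [subst_ung4Rhs_body]; exact (h.sumR (absurd · hβ)).sumL (absurd · hβ))

theorem stepsLift_substF_ung4Rhs {β : Act} (hβ : β ≠ .delta) :
    StepsLift β (subst F x (ung4Rhs x E F)) (ung4Rhs x E F) := fun _ h =>
  .unf (by rw [subst_ung4Rhs_body]; exact h.sumR (absurd · hβ))

theorem StepN.ung4Lhs_cases {n : ℕ} {γ : Act} {T' : Expr} (h : StepN n (ung4Lhs x E F) γ T') :
    (γ = .tau ∧ T' = ung4LhsDeriv x E F) ∨
      γ ≠ .delta ∧ ∃ m < n, StepN m (subst F x (ung4Lhs x E F)) γ T' := by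
  unfold ung4Lhs at h
  cases h with
  | unf h =>
    rw [subst_ung4Lhs_body] at h
    cases h with
    | sumL _ h _ => cases h; exact .inl ⟨rfl, rfl⟩
    | sumR _ h hs => exact .inr ⟨fun hγ => hs hγ ⟨_, .pre tau_ne_delta _⟩, _, by omega, h⟩

theorem StepN.ung4LhsDeriv_cases {n : ℕ} {γ : Act} {T' : Expr}
    (h : StepN n (ung4LhsDeriv x E F) γ T') :
    γ ≠ .delta ∧ ((∃ m < n, StepN m (ung4Lhs x E F) γ T') ∨
      ∃ m < n, StepN m (subst E x (ung4Lhs x E F)) γ T') := by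
  unfold ung4LhsDeriv at h
  cases h with
  | sumL _ h _ => cases h with
    | pri h hγ => exact ⟨hγ, .inl ⟨_, by omega, h⟩⟩
  | sumR _ h hs =>
    exact ⟨fun hγ => hs hγ (canTau_iff_exists_step.mpr ⟨_, ung4Lhs_step_tau.pri tau_ne_delta⟩),
      .inr ⟨_, by omega, h⟩⟩

theorem StepN.ung4Rhs_cases {n : ℕ} {γ : Act} {U' : Expr} (h : StepN n (ung4Rhs x E F) γ U') :
    (γ = .tau ∧ U' = ung4Rhs x E F) ∨ γ ≠ .delta ∧
      ((∃ m < n, StepN m (subst E x (ung4Rhs x E F)) γ U') ∨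
        ∃ m < n, StepN m (subst F x (ung4Rhs x E F)) γ U') := by
  unfold ung4Rhs at h
  cases h with
  | unf h =>
    rw [subst_ung4Rhs_body] at h
    cases h with
    | sumL _ h _ =>
      cases h with
      | sumL _ h _ => cases h; exact .inl ⟨rfl, rfl⟩
      | sumR _ h hs => exact .inr ⟨fun hγ => hs hγ ⟨_, .pre tau_ne_delta _⟩, .inl ⟨_, by omega, h⟩⟩
    | sumR _ h hs =>
      exact .inr ⟨fun hγ => hs hγ ⟨_, .sumL _ (.pre tau_ne_delta _)⟩, .inr ⟨_, by omega, h⟩⟩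

theorem ung4Rel_simUpToCtx (hE : ∀ z, free E z → z = x) (hF : ∀ z, free F z → z = x)
    (γ : Act) : SimUpToCtx (Ung4Rel x E F) γ := by
  intro n ih T U T' hTU hs
  have hPQ : ∀ {G}, (∀ z, free G z → z = x) →
      CtxClosure (Ung4Rel x E F) (subst G x (ung4Lhs x E F)) (subst G x (ung4Rhs x E F)) :=
    fun hG => (CtxClosure.base .lhs).subst hG (closed_ung4Lhs hE hF) (closed_ung4Rhs hE hF)
  cases hTU with
  | lhs =>
    rcases hs.ung4Lhs_cases with ⟨rfl, rfl⟩ | ⟨hγ, m, hm, hs⟩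
    · exact ⟨_, .single ung4Rhs_step_tau, .base .deriv⟩
    · obtain ⟨U', hw, hT'⟩ := ih m hm _ _ _ (hPQ hF) hs
      exact ⟨U', hw.lift_std hγ fun _ => stepsLift_substF_ung4Rhs, hT'⟩
  | deriv =>
    obtain ⟨hγ, ⟨m, hm, hs⟩ | ⟨m, hm, hs⟩⟩ := hs.ung4LhsDeriv_cases
    · exact ih m hm _ _ _ (.base .lhs) hs
    · obtain ⟨U', hw, hT'⟩ := ih m hm _ _ _ (hPQ hE) hs
      exact ⟨U', hw.lift_std hγ fun _ => stepsLift_substE_ung4Rhs, hT'⟩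

theorem ung4Rel_flip_simUpToCtx (hE : ∀ z, free E z → z = x) (hF : ∀ z, free F z → z = x)
    (γ : Act) : SimUpToCtx (flip (Ung4Rel x E F)) γ := by
  intro n ih U T U' hUT hs
  have hQP : ∀ {G}, (∀ z, free G z → z = x) →
      CtxClosure (flip (Ung4Rel x E F)) (subst G x (ung4Rhs x E F)) (subst G x (ung4Lhs x E F)) :=
    fun hG => (CtxClosure.base .lhs).swap.subst hG (closed_ung4Rhs hE hF) (closed_ung4Lhs hE hF)
  have hA : CtxClosure (flip (Ung4Rel x E F)) (ung4Rhs x E F) (ung4LhsDeriv x E F) :=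
    (CtxClosure.base .deriv).swap
  change Ung4Rel x E F T U at hUT
  cases hUT with
  | lhs =>
    rcases hs.ung4Rhs_cases with ⟨rfl, rfl⟩ | ⟨hγ, ⟨m, hm, hs⟩ | ⟨m, hm, hs⟩⟩
    · exact ⟨_, .single ung4Lhs_step_tau, hA⟩
    · obtain ⟨T', hw, hT'⟩ := ih m hm _ _ _ (hQP hE) hs
      exact ⟨T', .tau_head ung4Lhs_step_tau (hw.lift_std hγ fun _ => stepsLift_substE_ung4LhsDeriv),
        hT'⟩
    · obtain ⟨T', hw, hT'⟩ := ih m hm _ _ _ (hQP hF) hs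
      exact ⟨T', hw.lift_std hγ fun _ => stepsLift_substF_ung4Lhs, hT'⟩
  | deriv =>
    rcases hs.ung4Rhs_cases with ⟨rfl, rfl⟩ | ⟨hγ, ⟨m, hm, hs⟩ | ⟨m, hm, hs⟩⟩
    · exact ⟨_, .single (stepsLift_ung4LhsDeriv tau_ne_delta _ ung4Lhs_step_tau), hA⟩
    · obtain ⟨T', hw, hT'⟩ := ih m hm _ _ _ (hQP hE) hs
      exact ⟨T', hw.lift_std hγ fun _ => stepsLift_substE_ung4LhsDeriv, hT'⟩
    · obtain ⟨T', hw, hT'⟩ := ih m hm _ _ _ (hQP hF) hs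
      exact ⟨T', hw.lift_std hγ fun _ hβ =>
        (stepsLift_substF_ung4Lhs hβ).trans (stepsLift_ung4LhsDeriv hβ), hT'⟩

theorem ung4Lhs_obsCong_ung4Rhs (hE : ∀ z, free E z → z = x) (hF : ∀ z, free F z → z = x) :
    ObsCong (ung4Lhs x E F) (ung4Rhs x E F) :=
  CtxClosure.obsCong (ung4Rel_simUpToCtx hE hF) (ung4Rel_flip_simUpToCtx hE hF) .lhs

end Ung4

/-- soundness of (Ung4):
rec X.(τ.(pri(X) + E) + F) ≃ rec X.(τ.X + E + F). -/
theorem ung4_sound (x : ℕ) (E F : Expr) :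
    ObsCongO (.recur x (.sum (.pre Act.tau (.sum (.pri (.var x)) E)) F))
             (.recur x (.sum (.sum (.pre Act.tau (.var x)) E) F)) := by
  intro σ hσ
  have hfree (G : Expr) (z : ℕ) : free (msubst G (Function.update σ x (.var x))) z → z = x :=
    free_msubst_update_var hσ
  simpa [msubst, ung4Lhs, ung4Rhs] using ung4Lhs_obsCong_ung4Rhs (hfree E) (hfree F)

end PrioCalc
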